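/- arXiv:1903.00135 — 2 statements merged into one kernel-verified Lean document; each statement's English description precedes it below -/
import Mathlib

section
/- Marginalization of a stationary distribution: let (Y_k, Q_k) be a time-homogeneous Markov chain on Y × ℕ (Y finite) such that the conditional law of Y_{k+1} given (Y_k, Q_k) = (y,q) and action A_k = a does not depend on q. Let π be a stationary distribution of the joint chain under a stationary randomized policy θ: Y×ℕ → [0,1], and define the projected policy φ(y) = (∑_q θ(y,q)π(y,q)) / (∑_q π(y,q)) (whenever the denominator is positive). Then the marginal π̄(y) := ∑_q π(y,q) is a stationary distribution for the Y-marginal chain under policy φ. -/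
/-! Sum the stationarity equation `π(y', q') = ∑_z π(z) K^θ(z, (y', q'))` over the fibre
`q' ∈ ℕ` and exchange the two sums (all terms are nonnegative and the kernel rows sum to one).
Since the fibre sum of `K^θ((y, q), ·)` is `θ(y, q) P̄^W(y, y') + (1 - θ(y, q)) P̄^R(y, y')`,
summing over `q` for fixed `y` gives `S(y) P̄^W(y, y') + (π̄(y) - S(y)) P̄^R(y, y')` with
`S(y) = ∑_q θ(y, q) π(y, q)`, which is `π̄(y) P̄^φ(y, y')` with `φ(y) = S(y) / π̄(y)`. -/

open Function

lemma summable_of_tsum_eq_one {β : Type*} {f : β → ℝ} (h : ∑' b, f b = 1) : Summable f := by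
  by_contra hf
  simp [tsum_eq_zero_of_not_summable hf] at h

section StationaryMass

variable {β ι : Type*} {K : β → β → ℝ} {pi : β → ℝ} {e : ι → β}

lemma tsum_comp_mem_Icc_of_tsum_eq_one {f : β → ℝ} (hf0 : ∀ b, 0 ≤ f b)
    (hf1 : ∑' b, f b = 1) (he : Injective e) : ∑' i, f (e i) ∈ Set.Icc 0 1 :=
  ⟨tsum_nonneg fun i => hf0 (e i),
    hf1 ▸ tsum_comp_le_tsum_of_inj (summable_of_tsum_eq_one hf1) hf0 he⟩

lemma summable_mul_tsum_comp (hK0 : ∀ z z', 0 ≤ K z z') (hK1 : ∀ z, ∑' z', K z z' = 1)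
    (hpi0 : ∀ z, 0 ≤ pi z) (hpi : Summable pi) (he : Injective e) :
    Summable fun z => pi z * ∑' i, K z (e i) :=
  hpi.of_nonneg_of_le
    (fun z => mul_nonneg (hpi0 z) (tsum_comp_mem_Icc_of_tsum_eq_one (hK0 z) (hK1 z) he).1)
    (fun z => mul_le_of_le_one_right (hpi0 z) (tsum_comp_mem_Icc_of_tsum_eq_one (hK0 z) (hK1 z) he).2)

theorem tsum_comp_eq_tsum_mul_of_stationary (hK0 : ∀ z z', 0 ≤ K z z')
    (hK1 : ∀ z, ∑' z', K z z' = 1) (hpi0 : ∀ z, 0 ≤ pi z) (hpi : Summable pi)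
    (hstat : ∀ z', pi z' = ∑' z, pi z * K z z') (he : Injective e) :
    ∑' i, pi (e i) = ∑' z, pi z * ∑' i, K z (e i) := by
  set F : β → ι → ℝ := fun z i => pi z * K z (e i)
  have hrow : ∀ z, Summable (F z) := fun z =>
    ((summable_of_tsum_eq_one (hK1 z)).comp_injective he).mul_left (pi z)
  have hF : Summable (uncurry F) := by
    refine (summable_prod_of_nonneg fun p => mul_nonneg (hpi0 _) (hK0 _ _)).2 ⟨hrow, ?_⟩
    simpa only [F, tsum_mul_left] using summable_mul_tsum_comp hK0 hK1 hpi0 hpi he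
  calc ∑' i, pi (e i) = ∑' i, ∑' z, F z i := tsum_congr fun i => hstat (e i)
    _ = ∑' z, ∑' i, F z i := hF.tsum_comm' hrow fun i => hF.prod_symm.prod_factor i
    _ = ∑' z, pi z * ∑' i, K z (e i) := tsum_congr fun z => tsum_mul_left

end StationaryMass

section PolicyKernel

variable {β ι : Type*} (θ : β → ℝ) (KW KR : β → β → ℝ)

def policyKernel (z z' : β) : ℝ := θ z * KW z z' + (1 - θ z) * KR z z'

variable {θ KW KR}

lemma policyKernel_nonneg (hθ : ∀ z, θ z ∈ Set.Icc (0 : ℝ) 1) (hKW : ∀ z z', 0 ≤ KW z z')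
    (hKR : ∀ z z', 0 ≤ KR z z') (z z' : β) : 0 ≤ policyKernel θ KW KR z z' :=
  add_nonneg (mul_nonneg (hθ z).1 (hKW z z')) (mul_nonneg (sub_nonneg.2 (hθ z).2) (hKR z z'))

lemma tsum_policyKernel_comp (hKW : ∀ z, ∑' z', KW z z' = 1) (hKR : ∀ z, ∑' z', KR z z' = 1)
    {e : ι → β} (he : Injective e) (z : β) :
    ∑' i, policyKernel θ KW KR z (e i) =
      θ z * ∑' i, KW z (e i) + (1 - θ z) * ∑' i, KR z (e i) := by
  rw [← tsum_mul_left, ← tsum_mul_left]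
  exact ((summable_of_tsum_eq_one (hKW z)).comp_injective he).mul_left _
    |>.tsum_add (((summable_of_tsum_eq_one (hKR z)).comp_injective he).mul_left _)

lemma tsum_policyKernel (hKW : ∀ z, ∑' z', KW z z' = 1) (hKR : ∀ z, ∑' z', KR z z' = 1)
    (z : β) : ∑' z', policyKernel θ KW KR z z' = 1 := by
  simpa [hKW, hKR] using tsum_policyKernel_comp (θ := θ) hKW hKR injective_id z

end PolicyKernel

/-- When `∑ p = 0` the division is junk, but then `∑ θ p = 0` too and both sides vanish. -/
lemma tsum_mul_mix_eq_tsum_mul_mix_div {ι : Type*} {p θ : ι → ℝ} (hp0 : ∀ i, 0 ≤ p i)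
    (hp : Summable p) (hθ : ∀ i, θ i ∈ Set.Icc (0 : ℝ) 1) (a b : ℝ) :
    ∑' i, p i * (θ i * a + (1 - θ i) * b) =
      (∑' i, p i) * ((∑' i, θ i * p i) / (∑' i, p i) * a
        + (1 - (∑' i, θ i * p i) / (∑' i, p i)) * b) := by
  have hθp : Summable fun i => θ i * p i :=
    hp.of_nonneg_of_le (fun i => mul_nonneg (hθ i).1 (hp0 i))
      (fun i => mul_le_of_le_one_left (hp0 i) (hθ i).2)
  have hexpand : ∑' i, p i * (θ i * a + (1 - θ i) * b) =
      (∑' i, θ i * p i) * a + ((∑' i, p i) - ∑' i, θ i * p i) * b := by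
    rw [← hp.tsum_sub hθp, ← tsum_mul_right, ← tsum_mul_right,
      ← (hθp.mul_right a).tsum_add ((hp.sub hθp).mul_right b)]
    exact tsum_congr fun i => by ring
  rw [hexpand]
  rcases eq_or_ne (∑' i, p i) 0 with hT | hT
  · have hS : ∑' i, θ i * p i = 0 := le_antisymm
      (hT ▸ hθp.tsum_le_tsum (fun i => mul_le_of_le_one_left (hp0 i) (hθ i).2) hp)
      (tsum_nonneg fun i => mul_nonneg (hθ i).1 (hp0 i))
    simp [hT, hS]
  · field_simp

theorem stmt12_general {Y : Type*} [Fintype Y]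
    (KW KR : Y × ℕ → Y × ℕ → ℝ) (PW PR : Y → Y → ℝ)
    (hKWnn : ∀ z z', 0 ≤ KW z z') (hKRnn : ∀ z z', 0 ≤ KR z z')
    (hKWrow : ∀ z, ∑' z', KW z z' = 1) (hKRrow : ∀ z, ∑' z', KR z z' = 1)
    (hmargW : ∀ y q y', ∑' q', KW (y, q) (y', q') = PW y y')
    (hmargR : ∀ y q y', ∑' q', KR (y, q) (y', q') = PR y y')
    (θ : Y × ℕ → ℝ) (hθ : ∀ z, θ z ∈ Set.Icc (0 : ℝ) 1)
    (pi : Y × ℕ → ℝ) (hpinn : ∀ z, 0 ≤ pi z) (hsum : Summable pi)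
    (hstat : ∀ z', pi z' = ∑' z, pi z * (θ z * KW z z' + (1 - θ z) * KR z z')) :
    ∀ y' : Y, (∑' q, pi (y', q)) =
      ∑ y, (∑' q, pi (y, q)) *
        (((∑' q, θ (y, q) * pi (y, q)) / (∑' q, pi (y, q))) * PW y y'
          + (1 - (∑' q, θ (y, q) * pi (y, q)) / (∑' q, pi (y, q))) * PR y y') := by
  intro y'
  have hK0 := policyKernel_nonneg hθ hKWnn hKRnn
  have hK1 := tsum_policyKernel (θ := θ) hKWrow hKRrow
  have he : Injective (Prod.mk y' : ℕ → Y × ℕ) := Prod.mk_right_injective y'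
  have hfibre : ∀ z : Y × ℕ, ∑' q', policyKernel θ KW KR z (y', q') =
      θ z * PW z.1 y' + (1 - θ z) * PR z.1 y' := fun ⟨y, q⟩ => by
    rw [tsum_policyKernel_comp hKWrow hKRrow he, hmargW, hmargR]
  have hmass := tsum_comp_eq_tsum_mul_of_stationary hK0 hK1 hpinn hsum hstat he
  have hsummable := summable_mul_tsum_comp hK0 hK1 hpinn hsum he
  simp only [hfibre] at hmass hsummable
  rw [hmass, hsummable.tsum_prod' fun y => hsummable.prod_factor y, tsum_fintype]
  exact Finset.sum_congr rfl fun y _ =>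
    tsum_mul_mix_eq_tsum_mul_mix_div (fun q => hpinn (y, q))
      (hsum.comp_injective (Prod.mk_right_injective y)) (fun q => hθ (y, q)) (PW y y') (PR y y')

/-- Marginalization of a stationary distribution: for a Markov chain on `Y × ℕ` whose
`Y`-marginal transition law does not depend on the queue coordinate, if `pi` is a stationary
distribution under a stationary randomized policy `θ`, then the marginal
`π̄(y) = ∑_q pi(y,q)` is stationary for the `Y`-marginal chain under the projected policy
`φ(y) = (∑_q θ(y,q) pi(y,q)) / (∑_q pi(y,q))`. -/
theorem stmt12 {Y : Type*} [Fintype Y]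
    (KW KR : Y × ℕ → Y × ℕ → ℝ) (PW PR : Y → Y → ℝ)
    (hKWnn : ∀ z z', 0 ≤ KW z z') (hKRnn : ∀ z z', 0 ≤ KR z z')
    (hKWrow : ∀ z, ∑' z', KW z z' = 1) (hKRrow : ∀ z, ∑' z', KR z z' = 1)
    (hmargW : ∀ y q y', ∑' q', KW (y, q) (y', q') = PW y y')
    (hmargR : ∀ y q y', ∑' q', KR (y, q) (y', q') = PR y y')
    (θ : Y × ℕ → ℝ) (hθ : ∀ z, θ z ∈ Set.Icc (0 : ℝ) 1)
    (pi : Y × ℕ → ℝ) (hpinn : ∀ z, 0 ≤ pi z) (hsum : Summable pi)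
    (htot : ∑' z, pi z = 1)
    (hstat : ∀ z', pi z' = ∑' z, pi z * (θ z * KW z z' + (1 - θ z) * KR z z'))
    (hpos : ∀ y, 0 < ∑' q, pi (y, q)) :
    ∀ y' : Y, (∑' q, pi (y', q)) =
      ∑ y, (∑' q, pi (y, q)) *
        (((∑' q, θ (y, q) * pi (y, q)) / (∑' q, pi (y, q))) * PW y y'
          + (1 - (∑' q, θ (y, q) * pi (y, q)) / (∑' q, pi (y, q))) * PR y y') :=
  stmt12_general KW KR PW PR hKWnn hKRnn hKWrow hKRrow hmargW hmargR θ hθ pi hpinn hsum hstat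
end

section
/- Optimality of deterministic policies over randomized stationary policies for the long-run average reward on a finite MDP: for a finite state space Y and finite action sets, the maximum over stationary randomized policies of the long-run average reward (computed via stationary distributions) is attained by a stationary deterministic policy; formally, max over φ: Y → [0,1] of sup_{π stationary for P^φ} ∑_y r(y)·(reward rate under φ at y) equals the max restricted to φ taking values in {0,1}. -/
/-!
Encode a stationary pair `(φ, π)` by its occupation measure `(π φ, π (1 - φ))`. Occupation
measures form a compact convex polytope cut out by linear constraints, and the average reward is
a linear functional on it, so its maximum is attained at an extreme point. An extreme point `p`
plays a single action in every state: if it plays both at `y₀`, let `q` be the occupation measure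
of a stationary distribution, supported on the states `p` visits, of the policy of `p` modified to
always play `R` at `y₀`. Then `p ± t (q - p)` stays in the polytope for small `t`, although
`q ≠ p`. Stationary distributions exist on every closed set of states since `x ↦ x P` has a fixed
point on any compact convex invariant set: Cesàro averages of an orbit are almost fixed.
-/

open Finset Filter Topology Set

theorem ContinuousLinearMap.exists_fixedPoint_of_mapsTo {E : Type*} [NormedAddCommGroup E]
    [NormedSpace ℝ E] (f : E →L[ℝ] E) {K : Set E} (hK : IsCompact K) (hKc : Convex ℝ K)
    (hne : K.Nonempty) (hfK : MapsTo f K K) : ∃ x ∈ K, f x = x := by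
  obtain ⟨x₀, hx₀⟩ := hne
  obtain ⟨C, hC⟩ := isBounded_iff_forall_norm_le.mp hK.isBounded
  obtain ⟨x, hx, hmin⟩ := hK.exists_isMinOn ⟨x₀, hx₀⟩
    (continuous_norm.comp (f.continuous.sub continuous_id)).continuousOn
  refine ⟨x, hx, sub_eq_zero.mp (norm_le_zero_iff.mp ?_)⟩
  let a : ℕ → E := fun n => ∑ k ∈ range n, (n : ℝ)⁻¹ • f^[k] x₀
  have ha : ∀ n, 0 < n → a n ∈ K := fun n hn =>
    hKc.sum_mem (fun _ _ => by positivity) (by simp [hn.ne'])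
      fun k _ => hfK.iterate k hx₀
  have hfa : ∀ n, f (a n) - a n = (n : ℝ)⁻¹ • (f^[n] x₀ - x₀) := fun n => by
    simp only [a, map_sum, map_smul, ← Function.iterate_succ_apply' f, ← Finset.sum_sub_distrib,
      ← smul_sub, ← Finset.smul_sum, Finset.sum_range_sub (fun k => f^[k] x₀)]
    rfl
  refine ge_of_tendsto (tendsto_const_div_atTop_nhds_zero_nat (2 * C))
    (eventually_atTop.mpr ⟨1, fun n hn => ?_⟩)
  calc ‖f x - x‖ ≤ ‖f (a n) - a n‖ := hmin (ha n hn)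
    _ = (n : ℝ)⁻¹ * ‖f^[n] x₀ - x₀‖ := by rw [hfa, norm_smul, norm_inv, Real.norm_natCast]
    _ ≤ (n : ℝ)⁻¹ * (2 * C) := by
        gcongr
        exact (norm_sub_le _ _).trans (by linarith [hC _ (hfK.iterate n hx₀), hC _ hx₀])
    _ = 2 * C / n := by ring

theorem IsCompact.exists_mem_extremePoints_isMaxOn {E : Type*} [AddCommGroup E] [Module ℝ E]
    [TopologicalSpace E] [T2Space E] [IsTopologicalAddGroup E] [ContinuousSMul ℝ E]
    [LocallyConvexSpace ℝ E] {s : Set E} (hs : IsCompact s) (hne : s.Nonempty)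
    (l : StrongDual ℝ E) : ∃ x ∈ s.extremePoints ℝ, IsMaxOn l s x := by
  have hexp : IsExposed ℝ s {x ∈ s | ∀ y ∈ s, l y ≤ l x} := fun _ => ⟨l, rfl⟩
  obtain ⟨z, hz, hzmax⟩ := hs.exists_isMaxOn hne l.continuous.continuousOn
  obtain ⟨x, hx⟩ := (hexp.isCompact hs).extremePoints_nonempty ⟨z, hz, hzmax⟩
  exact ⟨x, hexp.isExtreme.extremePoints_subset_extremePoints hx, hx.1.2⟩

theorem eq_of_mem_extremePoints_of_eventually {E : Type*} [AddCommGroup E] [Module ℝ E]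
    {s : Set E} {x y : E} (hx : x ∈ s.extremePoints ℝ)
    (hline : ∀ᶠ t in 𝓝 (0 : ℝ), (1 - t) • x + t • y ∈ s) : y = x := by
  have hline' : ∀ᶠ t in 𝓝 (0 : ℝ), (1 + t) • x - t • y ∈ s :=
    ((continuous_neg.tendsto' (0 : ℝ) 0 neg_zero).eventually hline).mono fun t ht => by
      convert ht using 1; module
  obtain ⟨t, ⟨h₁, h₂⟩, ht⟩ := ((eventually_nhdsWithin_of_eventually_nhds
    (hline.and hline')).and self_mem_nhdsWithin : ∀ᶠ t in 𝓝[>] (0 : ℝ), _).exists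
  have hmid : x ∈ openSegment ℝ ((1 - t) • x + t • y) ((1 + t) • x - t • y) :=
    ⟨1 / 2, 1 / 2, by norm_num, by norm_num, by norm_num, by module⟩
  have hxy : t • (y - x) = 0 := by
    rw [← sub_eq_zero.mpr (hx.2 h₁ h₂ hmid)]; module
  exact sub_eq_zero.mp ((smul_eq_zero.mp hxy).resolve_left (ne_of_gt ht))

theorem eventually_nonneg_lineMap {a b : ℝ} (ha : 0 ≤ a) (hb : a = 0 → b = 0) :
    ∀ᶠ t in 𝓝 (0 : ℝ), 0 ≤ (1 - t) * a + t * b := by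
  rcases ha.eq_or_lt with rfl | ha
  · simp [hb rfl]
  have : Tendsto (fun t : ℝ => (1 - t) * a + t * b) (𝓝 0) (𝓝 a) :=
    (by fun_prop : Continuous fun t : ℝ => (1 - t) * a + t * b).tendsto' 0 a (by simp)
  exact (this.eventually_const_lt ha).mono fun _ h => h.le

section inducedPolicy

variable {Y : Type*} {p : (Y → ℝ) × (Y → ℝ)} {y : Y}

-- Equal to `0` at the states that `p` never visits.
noncomputable def inducedPolicy (p : (Y → ℝ) × (Y → ℝ)) (y : Y) : ℝ := p.1 y / (p.1 y + p.2 y)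

theorem inducedPolicy_eq_zero (h : p.1 y = 0) : inducedPolicy p y = 0 := by
  simp [inducedPolicy, h]

theorem inducedPolicy_eq_one (h₁ : p.1 y ≠ 0) (h₂ : p.2 y = 0) : inducedPolicy p y = 1 := by
  simp [inducedPolicy, h₁, h₂]

theorem inducedPolicy_eq_zero_or_one (h : p.1 y = 0 ∨ p.2 y = 0) :
    inducedPolicy p y = 0 ∨ inducedPolicy p y = 1 := by
  by_cases h₁ : p.1 y = 0
  · exact .inl (inducedPolicy_eq_zero h₁)
  · exact .inr (inducedPolicy_eq_one h₁ (h.resolve_left h₁))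

variable (h₁ : 0 ≤ p.1 y) (h₂ : 0 ≤ p.2 y)
include h₁ h₂

theorem inducedPolicy_mem_Icc : inducedPolicy p y ∈ Icc (0 : ℝ) 1 :=
  ⟨div_nonneg h₁ (add_nonneg h₁ h₂), div_le_one_of_le₀ (le_add_of_nonneg_right h₂)
    (add_nonneg h₁ h₂)⟩

theorem add_mul_inducedPolicy : (p.1 y + p.2 y) * inducedPolicy p y = p.1 y :=
  (mul_comm _ _).trans <| div_mul_cancel_of_imp fun h => by linarith

theorem add_mul_one_sub_inducedPolicy : (p.1 y + p.2 y) * (1 - inducedPolicy p y) = p.2 y := by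
  rw [mul_one_sub, add_mul_inducedPolicy h₁ h₂, add_sub_cancel_left]

end inducedPolicy

section Markov

variable {Y : Type*} [Fintype Y]

theorem exists_stationary_of_closed {P : Matrix Y Y ℝ} (hnn : ∀ y y', 0 ≤ P y y')
    (hrow : ∀ y, ∑ y', P y y' = 1) {T : Set Y} (hT : T.Nonempty)
    (hclosed : ∀ y ∈ T, ∀ y' ∉ T, P y y' = 0) :
    ∃ z ∈ stdSimplex ℝ Y, (∀ y ∉ T, z y = 0) ∧ ∀ y', ∑ y, z y * P y y' = z y' := by
  classical
  let f : (Y → ℝ) →L[ℝ] (Y → ℝ) := LinearMap.toContinuousLinearMap (Matrix.vecMulLinear P)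
  have hf : ∀ z y', f z y' = ∑ y, z y * P y y' := fun _ _ => rfl
  let K := stdSimplex ℝ Y ∩ {z | ∀ y ∉ T, z y = 0}
  have hK : IsCompact K := (isCompact_stdSimplex ℝ Y).inter_right <| by
    simp only [ofPred_forall]
    exact isClosed_iInter fun y => isClosed_iInter fun _ =>
      isClosed_eq (continuous_apply y) continuous_const
  have hKc : Convex ℝ K := (convex_stdSimplex ℝ Y).inter fun z hz w hw a b _ _ _ y hy => by
    simp [hz y hy, hw y hy]
  obtain ⟨y₀, hy₀⟩ := hT
  have hmaps : MapsTo f K K := by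
    rintro z ⟨⟨hz, hzs⟩, hzT⟩
    refine ⟨⟨fun y' => ?_, ?_⟩, fun y' hy' => ?_⟩
    · exact sum_nonneg fun y _ => mul_nonneg (hz y) (hnn y y')
    · simp only [hf]; rw [sum_comm]; simp [← mul_sum, hrow, hzs]
    · rw [hf]
      refine sum_eq_zero fun y _ => ?_
      by_cases hy : y ∈ T
      · rw [hclosed y hy y' hy', mul_zero]
      · rw [hzT y hy, zero_mul]
  have hsingle : Pi.single y₀ 1 ∈ K :=
    ⟨single_mem_stdSimplex ℝ y₀, fun y hy => by simp [show y ≠ y₀ from fun h => hy (h ▸ hy₀)]⟩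
  obtain ⟨z, ⟨hz, hzT⟩, hfz⟩ := f.exists_fixedPoint_of_mapsTo hK hKc ⟨_, hsingle⟩ hmaps
  exact ⟨z, hz, hzT, fun y' => (hf z y').symm.trans (congrFun hfz y')⟩

-- `p.1 y` and `p.2 y` are the long-run frequencies of being in `y` and playing `W`, resp. `R`.
def occupationPolytope (PW PR : Matrix Y Y ℝ) : Set ((Y → ℝ) × (Y → ℝ)) :=
  {p | (∀ y, 0 ≤ p.1 y) ∧ (∀ y, 0 ≤ p.2 y) ∧ ∑ y, (p.1 y + p.2 y) = 1 ∧
    ∀ y', ∑ y, (p.1 y * PW y y' + p.2 y * PR y y') = p.1 y' + p.2 y'}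

variable {PW PR : Matrix Y Y ℝ} {p q : (Y → ℝ) × (Y → ℝ)}

theorem smul_add_smul_mem_occupationPolytope (hp : p ∈ occupationPolytope PW PR)
    (hq : q ∈ occupationPolytope PW PR) {a b : ℝ} (hab : a + b = 1)
    (h₁ : ∀ y, 0 ≤ a * p.1 y + b * q.1 y) (h₂ : ∀ y, 0 ≤ a * p.2 y + b * q.2 y) :
    a • p + b • q ∈ occupationPolytope PW PR := by
  obtain ⟨-, -, hps, hpst⟩ := hp
  obtain ⟨-, -, hqs, hqst⟩ := hq
  refine ⟨h₁, h₂, ?_, fun y' => ?_⟩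
  · calc ∑ y, ((a • p + b • q).1 y + (a • p + b • q).2 y)
        = a * ∑ y, (p.1 y + p.2 y) + b * ∑ y, (q.1 y + q.2 y) := by
          simp only [mul_sum, ← sum_add_distrib]; congr 1; ext y; simp; ring
      _ = 1 := by rw [hps, hqs, mul_one, mul_one, hab]
  · calc ∑ y, ((a • p + b • q).1 y * PW y y' + (a • p + b • q).2 y * PR y y')
        = a * ∑ y, (p.1 y * PW y y' + p.2 y * PR y y') +
            b * ∑ y, (q.1 y * PW y y' + q.2 y * PR y y') := by
          simp only [mul_sum, ← sum_add_distrib]; congr 1; ext y; simp; ring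
      _ = (a • p + b • q).1 y' + (a • p + b • q).2 y' := by rw [hpst, hqst]; simp; ring

theorem convex_occupationPolytope : Convex ℝ (occupationPolytope PW PR) :=
  fun _ hp _ hq _ _ ha hb hab => smul_add_smul_mem_occupationPolytope hp hq hab
    (fun y => by have := hp.1 y; have := hq.1 y; positivity)
    (fun y => by have := hp.2.1 y; have := hq.2.1 y; positivity)

theorem isCompact_occupationPolytope : IsCompact (occupationPolytope PW PR) := by
  refine (isCompact_Icc (a := 0) (b := 1)).of_isClosed_subset ?_ fun p ⟨h₁, h₂, hs, _⟩ => ?_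
  · simp only [occupationPolytope, ofPred_and, ofPred_forall]
    exact (isClosed_iInter fun y => isClosed_le continuous_const (by fun_prop)).inter
      ((isClosed_iInter fun y => isClosed_le continuous_const (by fun_prop)).inter
        ((isClosed_eq (by fun_prop) continuous_const).inter
          (isClosed_iInter fun y' => isClosed_eq (by fun_prop) (by fun_prop))))
  · have hle : ∀ y, p.1 y + p.2 y ≤ 1 := fun y =>
      hs ▸ single_le_sum (fun y _ => add_nonneg (h₁ y) (h₂ y)) (mem_univ y)
    exact ⟨⟨h₁, h₂⟩, fun y => show p.1 y ≤ 1 by linarith [hle y, h₂ y],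
      fun y => show p.2 y ≤ 1 by linarith [hle y, h₁ y]⟩

theorem eventually_lineMap_mem_occupationPolytope (hp : p ∈ occupationPolytope PW PR)
    (hq : q ∈ occupationPolytope PW PR) (h₁ : Function.support q.1 ⊆ Function.support p.1)
    (h₂ : Function.support q.2 ⊆ Function.support p.2) :
    ∀ᶠ t in 𝓝 (0 : ℝ), (1 - t) • p + t • q ∈ occupationPolytope PW PR := by
  have e₁ := eventually_all.mpr fun y => eventually_nonneg_lineMap (hp.1 y)
    fun h => Function.notMem_support.mp fun hy => h₁ hy h
  have e₂ := eventually_all.mpr fun y => eventually_nonneg_lineMap (hp.2.1 y)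
    fun h => Function.notMem_support.mp fun hy => h₂ hy h
  filter_upwards [e₁, e₂] with t ht₁ ht₂
  exact smul_add_smul_mem_occupationPolytope hp hq (by ring) ht₁ ht₂

theorem mem_occupationPolytope_of_stationary {φ π : Y → ℝ} (hφ : ∀ y, φ y ∈ Icc (0 : ℝ) 1)
    (hπ : π ∈ stdSimplex ℝ Y)
    (hstat : ∀ y', ∑ y, π y * (φ y * PW y y' + (1 - φ y) * PR y y') = π y') :
    ((fun y => π y * φ y, fun y => π y * (1 - φ y)) : (Y → ℝ) × (Y → ℝ)) ∈
      occupationPolytope PW PR := by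
  refine ⟨fun y => mul_nonneg (hπ.1 y) (hφ y).1, fun y => mul_nonneg (hπ.1 y)
    (sub_nonneg.mpr (hφ y).2), ?_, fun y' => ?_⟩
  · simpa [← mul_add] using hπ.2
  · calc ∑ y, (π y * φ y * PW y y' + π y * (1 - φ y) * PR y y')
        = ∑ y, π y * (φ y * PW y y' + (1 - φ y) * PR y y') := sum_congr rfl fun y _ => by ring
      _ = π y' * φ y' + π y' * (1 - φ y') := by rw [hstat]; ring

theorem add_mem_stdSimplex (hp : p ∈ occupationPolytope PW PR) : p.1 + p.2 ∈ stdSimplex ℝ Y :=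
  ⟨fun y => add_nonneg (hp.1 y) (hp.2.1 y), hp.2.2.1⟩

theorem stationary_inducedPolicy (hp : p ∈ occupationPolytope PW PR) (y' : Y) :
    ∑ y, (p.1 + p.2) y * (inducedPolicy p y * PW y y' + (1 - inducedPolicy p y) * PR y y') =
      (p.1 + p.2) y' := by
  rw [Pi.add_apply, ← hp.2.2.2 y']
  refine sum_congr rfl fun y _ => ?_
  rw [Pi.add_apply, mul_add, ← mul_assoc, ← mul_assoc, add_mul_inducedPolicy (hp.1 y) (hp.2.1 y),
    add_mul_one_sub_inducedPolicy (hp.1 y) (hp.2.1 y)]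

theorem mul_eq_zero_of_mem_occupationPolytope (hWnn : ∀ y y', 0 ≤ PW y y')
    (hRnn : ∀ y y', 0 ≤ PR y y') (hp : p ∈ occupationPolytope PW PR) {y' : Y}
    (hy' : p.1 y' + p.2 y' = 0) (y : Y) : p.1 y * PW y y' = 0 ∧ p.2 y * PR y y' = 0 := by
  have hnn : ∀ y, 0 ≤ p.1 y * PW y y' := fun y => mul_nonneg (hp.1 y) (hWnn y y')
  have hnn' : ∀ y, 0 ≤ p.2 y * PR y y' := fun y => mul_nonneg (hp.2.1 y) (hRnn y y')
  have h := (sum_eq_zero_iff_of_nonneg fun y _ => add_nonneg (hnn y) (hnn' y)).mp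
    ((hp.2.2.2 y').trans hy') y (mem_univ y)
  exact (add_eq_zero_iff_of_nonneg (hnn y) (hnn' y)).mp h

theorem exists_mem_occupationPolytope_fst_eq_zero (hWnn : ∀ y y', 0 ≤ PW y y')
    (hWrow : ∀ y, ∑ y', PW y y' = 1) (hRnn : ∀ y y', 0 ≤ PR y y')
    (hRrow : ∀ y, ∑ y', PR y y' = 1) (hp : p ∈ occupationPolytope PW PR) {y₀ : Y}
    (hy₀ : p.2 y₀ ≠ 0) :
    ∃ q ∈ occupationPolytope PW PR, q.1 y₀ = 0 ∧ Function.support q.1 ⊆ Function.support p.1 ∧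
      Function.support q.2 ⊆ Function.support p.2 := by
  classical
  -- the policy that agrees with `p` except that it always plays `R` at `y₀`
  set φ := Function.update (inducedPolicy p) y₀ 0
  have hφ : ∀ y, φ y ∈ Icc (0 : ℝ) 1 := fun y => by
    rcases eq_or_ne y y₀ with rfl | hy
    · simp [φ]
    · simpa [φ, hy] using inducedPolicy_mem_Icc (hp.1 y) (hp.2.1 y)
  have hφ₁ : ∀ y, p.1 y = 0 → φ y = 0 := fun y h => by
    rcases eq_or_ne y y₀ with rfl | hy
    · simp [φ]
    · simpa [φ, hy] using inducedPolicy_eq_zero h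
  have hφ₂ : ∀ y, p.1 y + p.2 y ≠ 0 → p.2 y = 0 → φ y = 1 := fun y hy h => by
    have hne : y ≠ y₀ := by rintro rfl; exact hy₀ h
    simpa [φ, hne] using inducedPolicy_eq_one (by simpa [h] using hy) h
  let P : Matrix Y Y ℝ := fun y y' => φ y * PW y y' + (1 - φ y) * PR y y'
  have hPnn : ∀ y y', 0 ≤ P y y' := fun y y' => add_nonneg (mul_nonneg (hφ y).1 (hWnn y y'))
    (mul_nonneg (sub_nonneg.mpr (hφ y).2) (hRnn y y'))
  have hProw : ∀ y, ∑ y', P y y' = 1 := fun y => by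
    simp only [P, sum_add_distrib, ← mul_sum, hWrow, hRrow]; ring
  have hclosed : ∀ y ∈ {y | p.1 y + p.2 y ≠ 0}, ∀ y' ∉ {y | p.1 y + p.2 y ≠ 0}, P y y' = 0 := by
    intro y hy y' hy'
    obtain ⟨hW, hR⟩ := mul_eq_zero_of_mem_occupationPolytope hWnn hRnn hp (not_not.mp hy') y
    have hW' : φ y * PW y y' = 0 := by
      by_cases h : p.1 y = 0
      · rw [hφ₁ y h, zero_mul]
      · rw [(mul_eq_zero.mp hW).resolve_left h, mul_zero]
    have hR' : (1 - φ y) * PR y y' = 0 := by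
      by_cases h : p.2 y = 0
      · rw [hφ₂ y hy h, sub_self, zero_mul]
      · rw [(mul_eq_zero.mp hR).resolve_left h, mul_zero]
    simp only [P, hW', hR', add_zero]
  obtain ⟨z, hz, hzT, hzstat⟩ := exists_stationary_of_closed hPnn hProw
    ⟨y₀, by simpa using (add_pos_of_nonneg_of_pos (hp.1 y₀) ((hp.2.1 y₀).lt_of_ne' hy₀)).ne'⟩
    hclosed
  refine ⟨_, mem_occupationPolytope_of_stationary hφ hz hzstat, by simp [φ], fun y hy h => ?_,
    fun y hy h => ?_⟩
  · exact hy (by simp [hφ₁ y h])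
  · have hzy : z y ≠ 0 := left_ne_zero_of_mul hy
    exact hy (by simp [hφ₂ y (not_not.mp (mt (hzT y) hzy)) h])

theorem fst_eq_zero_or_snd_eq_zero_of_mem_extremePoints (hWnn : ∀ y y', 0 ≤ PW y y')
    (hWrow : ∀ y, ∑ y', PW y y' = 1) (hRnn : ∀ y y', 0 ≤ PR y y')
    (hRrow : ∀ y, ∑ y', PR y y' = 1) (hp : p ∈ (occupationPolytope PW PR).extremePoints ℝ)
    (y : Y) : p.1 y = 0 ∨ p.2 y = 0 := by
  by_contra! h
  obtain ⟨q, hq, hqy, h₁, h₂⟩ :=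
    exists_mem_occupationPolytope_fst_eq_zero hWnn hWrow hRnn hRrow hp.1 h.2
  have hqp := eq_of_mem_extremePoints_of_eventually hp
    (eventually_lineMap_mem_occupationPolytope hp.1 hq h₁ h₂)
  exact h.1 (hqp ▸ hqy)

noncomputable def occupationReward (r : Y → ℝ) : StrongDual ℝ ((Y → ℝ) × (Y → ℝ)) :=
  ∑ y, r y • (ContinuousLinearMap.proj y).comp (ContinuousLinearMap.fst ℝ (Y → ℝ) (Y → ℝ))

theorem occupationReward_apply (r : Y → ℝ) (p : (Y → ℝ) × (Y → ℝ)) :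
    occupationReward r p = ∑ y, p.1 y * r y := by
  simp [occupationReward, mul_comm]

end Markov

theorem stmt17_general {Y : Type*} [Fintype Y]
    (PW PR : Matrix Y Y ℝ)
    (hWnn : ∀ y y', 0 ≤ PW y y') (hWrow : ∀ y, ∑ y', PW y y' = 1)
    (hRnn : ∀ y y', 0 ≤ PR y y') (hRrow : ∀ y, ∑ y', PR y y' = 1)
    (r : Y → ℝ) :
    sSup {v : ℝ | ∃ φ : Y → ℝ, (∀ y, φ y ∈ Set.Icc (0 : ℝ) 1) ∧
        ∃ pi : Y → ℝ, (∀ y, 0 ≤ pi y) ∧ (∑ y, pi y = 1) ∧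
          (∀ y', ∑ y, pi y * (φ y * PW y y' + (1 - φ y) * PR y y') = pi y') ∧
          v = ∑ y, pi y * r y * φ y} =
    sSup {v : ℝ | ∃ φ : Y → ℝ, (∀ y, φ y = 0 ∨ φ y = 1) ∧
        ∃ pi : Y → ℝ, (∀ y, 0 ≤ pi y) ∧ (∑ y, pi y = 1) ∧
          (∀ y', ∑ y, pi y * (φ y * PW y y' + (1 - φ y) * PR y y') = pi y') ∧
          v = ∑ y, pi y * r y * φ y} := by
  apply csSup_eq_csSup_of_forall_exists_le
  · rintro _ ⟨φ, hφ, π, hπnn, hπsum, hπstat, rfl⟩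
    have hp := mem_occupationPolytope_of_stationary hφ ⟨hπnn, hπsum⟩ hπstat
    obtain ⟨e, he, hmax⟩ := isCompact_occupationPolytope.exists_mem_extremePoints_isMaxOn
      ⟨_, hp⟩ (occupationReward r)
    have heK := he.1
    refine ⟨_, ⟨inducedPolicy e, fun y => inducedPolicy_eq_zero_or_one
      (fst_eq_zero_or_snd_eq_zero_of_mem_extremePoints hWnn hWrow hRnn hRrow he y),
      e.1 + e.2, (add_mem_stdSimplex heK).1, (add_mem_stdSimplex heK).2,
      stationary_inducedPolicy heK, rfl⟩, ?_⟩
    calc ∑ y, π y * r y * φ y = occupationReward r _ := by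
          rw [occupationReward_apply]; exact sum_congr rfl fun y _ => by ring
      _ ≤ occupationReward r e := hmax hp
      _ = ∑ y, (e.1 + e.2) y * r y * inducedPolicy e y := by
          rw [occupationReward_apply]
          refine sum_congr rfl fun y _ => ?_
          rw [mul_right_comm, Pi.add_apply, add_mul_inducedPolicy (heK.1 y) (heK.2.1 y)]
  · rintro _ ⟨φ, hφ, hπ⟩
    exact ⟨_, ⟨φ, fun y => by rcases hφ y with h | h <;> simp [h], hπ⟩, le_rfl⟩

/-- Optimality of deterministic policies for the long-run average reward on a finite
two-action MDP: the supremum over randomized stationary policies `φ : Y → [0,1]` of the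
long-run average reward (computed via stationary distributions of
`P^φ = φ P^W + (1−φ) P^R`) equals the supremum restricted to deterministic policies
(`φ` taking values in `{0,1}`). -/
theorem stmt17 {Y : Type*} [Fintype Y]
    (PW PR : Matrix Y Y ℝ)
    (hWnn : ∀ y y', 0 ≤ PW y y') (hWrow : ∀ y, ∑ y', PW y y' = 1)
    (hRnn : ∀ y y', 0 ≤ PR y y') (hRrow : ∀ y, ∑ y', PR y y' = 1)
    (r : Y → ℝ) (hr : ∀ y, r y ∈ Set.Ioo (0 : ℝ) 1) :
    sSup {v : ℝ | ∃ φ : Y → ℝ, (∀ y, φ y ∈ Set.Icc (0 : ℝ) 1) ∧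
        ∃ pi : Y → ℝ, (∀ y, 0 ≤ pi y) ∧ (∑ y, pi y = 1) ∧
          (∀ y', ∑ y, pi y * (φ y * PW y y' + (1 - φ y) * PR y y') = pi y') ∧
          v = ∑ y, pi y * r y * φ y} =
    sSup {v : ℝ | ∃ φ : Y → ℝ, (∀ y, φ y = 0 ∨ φ y = 1) ∧
        ∃ pi : Y → ℝ, (∀ y, 0 ≤ pi y) ∧ (∑ y, pi y = 1) ∧
          (∀ y', ∑ y, pi y * (φ y * PW y y' + (1 - φ y) * PR y y') = pi y') ∧
          v = ∑ y, pi y * r y * φ y} :=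
  stmt17_general PW PR hWnn hWrow hRnn hRrow r
end
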